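/- Any single trajectory (curve) in the plane whose r_j-neighborhood covers the region R_j for every j = 1, ..., i (with R_j pairwise disjoint regions of area > 2^{2j}/2 and r_j = 2^{-2(i−j+1)}) has length at least i·2^{2i−1} − i·π/2; in particular at least (1/2)·i·2^{2i} − i·π/2. -/

import Mathlib

open MeasureTheory Real

/-- The axis-aligned closed square of side y centered at the origin of the Euclidean plane. -/
def centSquare (y : ℝ) : Set (EuclideanSpace ℝ (Fin 2)) := {p | |p 0| ≤ y / 2 ∧ |p 1| ≤ y / 2}

/-- The annular regions of the static lower bound: R 1 = Q(2), R k = Q(2^k) \ Q(2^{k-1}). -/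
def annReg (k : ℕ) : Set (EuclideanSpace ℝ (Fin 2)) :=
  if k = 1 then centSquare 2 else centSquare ((2:ℝ) ^ k) \ centSquare ((2:ℝ) ^ (k - 1))

/-!
Work in `ℝ²` with the sup norm, where closed balls are squares; the Euclidean covering
hypothesis still holds there. Sample the curve at times `0, h, …, n h = x` with `h ≤ δ`.
A square of half-width `ρ` has area `(2ρ)²`, and moving its centre by `h` sweeps at most
`4ρh` of new area, since both squares contain the square of half-width `ρ - h/2` about the
midpoint. So if the `ρ_j`-squares (`ρ_j = r_j + δ`) around the samples cover a set `K_j`,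
at least `(area K_j - 4ρ_j²) / (4ρ_j h)` steps end near `K_j`. Taking for `K_j` the region
`R_j` shrunk by `3r_j/2`, those steps end inside `R_j`; as the `R_j` are disjoint, no step is
counted twice and `x ≥ ∑_j (area K_j - 4ρ_j²) / (4ρ_j)`. With `δ = 4^{-2i}/16` the explicit
areas of the `K_j` give the bound.
-/

open Metric Set
open scoped Finset

section BoxChain

variable {ι : Type*} [Fintype ι]

theorem volume_real_pi_closedBall (a : ι → ℝ) {r : ℝ} (hr : 0 ≤ r) :
    volume.real (closedBall a r) = (2 * r) ^ Fintype.card ι := by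
  rw [measureReal_def, Real.volume_pi_closedBall _ hr, ENNReal.toReal_ofReal (by positivity)]

theorem volume_closedBall_sdiff_closedBall_le {x y : ι → ℝ} {ρ δ : ℝ}
    (hxy : dist x y ≤ δ) (hδρ : δ ≤ 2 * ρ) :
    volume (closedBall x ρ \ closedBall y ρ) ≤
      ENNReal.ofReal (Fintype.card ι * δ * (2 * ρ) ^ (Fintype.card ι - 1)) := by
  have hδ : 0 ≤ δ := dist_nonneg.trans hxy
  set m := midpoint ℝ x y
  have hmx : closedBall m (ρ - δ / 2) ⊆ closedBall x ρ := by
    refine closedBall_subset_closedBall' ?_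
    rw [dist_midpoint_left, Real.norm_two]; linarith
  have hmy : closedBall m (ρ - δ / 2) ⊆ closedBall y ρ := by
    refine closedBall_subset_closedBall' ?_
    rw [dist_midpoint_right, Real.norm_two]; linarith
  have hpow : (2 * ρ) ^ Fintype.card ι - (2 * ρ - δ) ^ Fintype.card ι ≤
      Fintype.card ι * δ * (2 * ρ) ^ (Fintype.card ι - 1) := by
    refine (le_abs_self _).trans ((abs_pow_sub_pow_le _ _ _).trans_eq ?_)
    rw [sub_sub_cancel, abs_of_nonneg hδ, abs_of_nonneg (by linarith),
      abs_of_nonneg (by linarith), max_eq_left (by linarith)]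
    ring
  calc volume (closedBall x ρ \ closedBall y ρ)
      ≤ volume (closedBall x ρ \ closedBall m (ρ - δ / 2)) :=
        measure_mono (sdiff_subset_sdiff_right hmy)
    _ = volume (closedBall x ρ) - volume (closedBall m (ρ - δ / 2)) :=
        measure_sdiff hmx measurableSet_closedBall.nullMeasurableSet measure_closedBall_lt_top.ne
    _ = ENNReal.ofReal ((2 * ρ) ^ Fintype.card ι) -
          ENNReal.ofReal ((2 * ρ - δ) ^ Fintype.card ι) := by
        rw [Real.volume_pi_closedBall _ (by linarith), Real.volume_pi_closedBall _ (by linarith)]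
        ring_nf
    _ ≤ _ := by
        have : 0 ≤ 2 * ρ - δ := by linarith
        rw [← ENNReal.ofReal_sub _ (by positivity)]
        exact ENNReal.ofReal_le_ofReal hpow

open scoped Classical in
theorem volume_le_of_subset_iUnion_closedBall_chain {T : Set (ι → ℝ)} {c : ℕ → ι → ℝ} {n : ℕ}
    {ρ δ : ℝ} (hδ : 0 ≤ δ) (hδρ : δ ≤ 2 * ρ) (hc : ∀ k < n, dist (c (k + 1)) (c k) ≤ δ)
    (hT : T ⊆ ⋃ k ≤ n, closedBall (c k) ρ) :
    volume T ≤ ENNReal.ofReal ((2 * ρ) ^ Fintype.card ι) +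
      #{k ∈ Finset.range n | (T ∩ closedBall (c (k + 1)) ρ).Nonempty} *
        ENNReal.ofReal (Fintype.card ι * δ * (2 * ρ) ^ (Fintype.card ι - 1)) := by
  set S := {k ∈ Finset.range n | (T ∩ closedBall (c (k + 1)) ρ).Nonempty}
  -- a point of `T` is charged to the first ball of the chain that contains it
  have hcover : T ⊆ closedBall (c 0) ρ ∪
      ⋃ k ∈ S, closedBall (c (k + 1)) ρ \ closedBall (c k) ρ := by
    intro p hp
    have hex : ∃ k, k ≤ n ∧ p ∈ closedBall (c k) ρ := by simpa using hT hp
    obtain ⟨hmn, hpm⟩ := Nat.find_spec hex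
    rcases hm : Nat.find hex with _ | k
    · exact Or.inl (hm ▸ hpm)
    · rw [hm] at hmn hpm
      have hpk : p ∉ closedBall (c k) ρ := fun hpk =>
        (Nat.find_min' hex ⟨by omega, hpk⟩).not_gt (by omega)
      refine Or.inr (mem_biUnion ?_ ⟨hpm, hpk⟩)
      simp only [S, Finset.coe_filter, Finset.mem_range, mem_ofPred_eq]
      exact ⟨by omega, p, hp, hpm⟩
  calc volume T
      ≤ volume (closedBall (c 0) ρ) +
          ∑ k ∈ S, volume (closedBall (c (k + 1)) ρ \ closedBall (c k) ρ) :=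
        (measure_mono hcover).trans
          ((measure_union_le _ _).trans (add_le_add_right (measure_biUnion_finset_le _ _) _))
    _ ≤ ENNReal.ofReal ((2 * ρ) ^ Fintype.card ι) +
          ∑ _k ∈ S, ENNReal.ofReal (Fintype.card ι * δ * (2 * ρ) ^ (Fintype.card ι - 1)) := by
        rw [Real.volume_pi_closedBall _ (by linarith)]
        gcongr with k hk
        exact volume_closedBall_sdiff_closedBall_le
          (hc k (Finset.mem_range.mp (Finset.mem_filter.mp hk).1)) hδρ
    _ = _ := by rw [Finset.sum_const, nsmul_eq_mul]

end BoxChain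

section Sampling

variable {E : Type*} [PseudoMetricSpace E] {γ : ℝ → E} {n : ℕ} {h : ℝ}

theorem exists_nat_mul_eq_of_nonneg {x δ : ℝ} (hx : 0 ≤ x) (hδ : 0 < δ) :
    ∃ (n : ℕ) (h : ℝ), 0 ≤ h ∧ h ≤ δ ∧ n * h = x := by
  set n := ⌈x / δ⌉₊
  have hxn : x ≤ δ * n := by
    rw [mul_comm, ← div_le_iff₀ hδ]; exact Nat.le_ceil _
  refine ⟨n, x / n, by positivity, div_le_of_le_mul₀ n.cast_nonneg hδ.le hxn, ?_⟩
  rcases eq_or_ne (n : ℝ) 0 with hn | hn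
  · rw [hn, mul_zero] at hxn; rw [hn, zero_mul]; linarith
  · exact mul_div_cancel₀ x hn

theorem LipschitzOnWith.dist_sample_succ_le (hγ : LipschitzOnWith 1 γ (Icc 0 (n * h)))
    (hh : 0 ≤ h) {k : ℕ} (hk : k < n) : dist (γ ((k + 1 : ℕ) * h)) (γ (k * h)) ≤ h := by
  have mem : ∀ s : ℝ, 0 ≤ s → s ≤ n → s * h ∈ Icc 0 (n * h) := fun s hs hsn =>
    ⟨by positivity, mul_le_mul_of_nonneg_right hsn hh⟩
  have hkn : (k : ℝ) ≤ n := by exact_mod_cast hk.le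
  calc dist (γ ((k + 1 : ℕ) * h)) (γ (k * h))
      ≤ dist ((k + 1 : ℕ) * h) (k * h) := by
        simpa using hγ.dist_le_mul _ (mem _ (by positivity) (by exact_mod_cast hk))
          _ (mem _ (by positivity) hkn)
    _ = h := by
        push_cast
        rw [Real.dist_eq, ← sub_mul, add_sub_cancel_left, one_mul, abs_of_nonneg hh]

theorem LipschitzOnWith.exists_dist_sample_le (hγ : LipschitzOnWith 1 γ (Icc 0 (n * h)))
    (hh : 0 ≤ h) {t : ℝ} (ht : t ∈ Icc 0 (n * h)) : ∃ k ≤ n, dist (γ t) (γ (k * h)) ≤ h := by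
  rcases hh.eq_or_lt with rfl | hh
  · obtain rfl : t = 0 := by simpa using ht
    exact ⟨0, n.zero_le, by simp⟩
  have hkn : ⌈t / h⌉₊ ≤ n := Nat.ceil_le.mpr ((div_le_iff₀ hh).mpr ht.2)
  have hle : t ≤ ⌈t / h⌉₊ * h := (div_le_iff₀ hh).mp (Nat.le_ceil _)
  have hlt : ⌈t / h⌉₊ * h < t + h := by
    have := Nat.ceil_lt_add_one (div_nonneg ht.1 hh.le)
    rwa [← lt_div_iff₀ hh, add_div, div_self hh.ne']
  have hmem : (⌈t / h⌉₊ : ℝ) * h ∈ Icc 0 (n * h) :=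
    ⟨by positivity, mul_le_mul_of_nonneg_right (by exact_mod_cast hkn) hh.le⟩
  refine ⟨⌈t / h⌉₊, hkn, ?_⟩
  calc dist (γ t) (γ (⌈t / h⌉₊ * h)) ≤ dist t (⌈t / h⌉₊ * h) := by
        simpa using hγ.dist_le_mul _ ht _ hmem
    _ ≤ h := by rw [Real.dist_eq, abs_le]; constructor <;> linarith

end Sampling

/-- A box of half-width `ρ` in `ℝ^d` has volume `(2ρ)^d`, and each step of length `h` of its
centre adds at most `d h (2ρ)^(d-1)`: so a curve whose `ρ`-neighbourhood (sup norm) has volume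
`V` is at least this long. -/
noncomputable def sweepLength (d : ℕ) (V ρ : ℝ) : ℝ :=
  (V - (2 * ρ) ^ d) / (d * (2 * ρ) ^ (d - 1))

open scoped Classical in
theorem sum_sweepLength_le_of_lipschitzOnWith_cover {ι κ : Type*} [Fintype ι] {γ : ℝ → ι → ℝ}
    {x δ : ℝ} (hx : 0 ≤ x) (hδ : 0 < δ) (hγ : LipschitzOnWith 1 γ (Icc 0 x)) {J : Finset κ}
    {A K : κ → Set (ι → ℝ)} {r : κ → ℝ} (hA : (J : Set κ).PairwiseDisjoint A)
    (hr : ∀ j ∈ J, 0 ≤ r j) (hKA : ∀ j ∈ J, ∀ p ∈ K j, closedBall p (r j + δ) ⊆ A j)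
    (hcov : ∀ j ∈ J, ∀ p ∈ K j, ∃ t ∈ Icc 0 x, dist p (γ t) ≤ r j) :
    ∑ j ∈ J, sweepLength (Fintype.card ι) (volume.real (K j)) (r j + δ) ≤ x := by
  obtain ⟨n, h, hh, hhδ, rfl⟩ := exists_nat_mul_eq_of_nonneg hx hδ
  set c : ℕ → ι → ℝ := fun k => γ (k * h)
  -- a step of the sampled curve is charged to the region containing its endpoint
  set S : κ → Finset ℕ := fun j => {k ∈ Finset.range n | c (k + 1) ∈ A j}
  have hS : ∀ j ∈ J, sweepLength (Fintype.card ι) (volume.real (K j)) (r j + δ) ≤ #(S j) * h := by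
    intro j hj
    set ρ := r j + δ
    have hρ : 0 ≤ ρ := by linarith [hr j hj]
    have hT : K j ⊆ ⋃ k ≤ n, closedBall (c k) ρ := by
      intro p hp
      obtain ⟨t, ht, hpt⟩ := hcov j hj p hp
      obtain ⟨k, hk, htk⟩ := hγ.exists_dist_sample_le hh ht
      exact mem_biUnion hk (by rw [mem_closedBall]; linarith [dist_triangle p (γ t) (c k)])
    have hsub : {k ∈ Finset.range n | (K j ∩ closedBall (c (k + 1)) ρ).Nonempty} ⊆ S j :=
      Finset.monotone_filter_right _ fun k _ ⟨p, hp, hpk⟩ =>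
        hKA j hj p hp (by rwa [mem_closedBall_comm])
    have hvol := volume_le_of_subset_iUnion_closedBall_chain hh (by linarith [hr j hj])
      (fun k hk => hγ.dist_sample_succ_le hh hk) hT
    have hvol' : volume.real (K j) ≤ (2 * ρ) ^ Fintype.card ι +
        #(S j) * (Fintype.card ι * h * (2 * ρ) ^ (Fintype.card ι - 1)) := by
      refine ENNReal.toReal_le_of_le_ofReal (by positivity) (hvol.trans ?_)
      rw [ENNReal.ofReal_add (by positivity) (by positivity),
        ENNReal.ofReal_mul (Nat.cast_nonneg _), ENNReal.ofReal_natCast]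
      gcongr
    rw [sweepLength]
    refine div_le_of_le_mul₀ (by positivity) (by positivity) ?_
    linarith
  have hcard : ∑ j ∈ J, #(S j) ≤ n := by
    rw [← Finset.card_biUnion (s := J) (t := S) fun j hj l hl hjl => Finset.disjoint_filter.mpr
      fun k _ hk hk' => Set.disjoint_left.mp (hA hj hl hjl) hk hk']
    calc #(J.biUnion S) ≤ #(Finset.range n) :=
          Finset.card_le_card (Finset.biUnion_subset.mpr fun j _ => Finset.filter_subset _ _)
      _ = n := Finset.card_range n
  calc _ ≤ ∑ j ∈ J, (#(S j) : ℝ) * h := Finset.sum_le_sum hS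
    _ = (∑ j ∈ J, #(S j) : ℕ) * h := by rw [Nat.cast_sum, Finset.sum_mul]
    _ ≤ n * h := by gcongr

theorem four_le_two_pow {j : ℕ} (hj : 2 ≤ j) : (4 : ℝ) ≤ 2 ^ j :=
  calc (4 : ℝ) = 2 ^ 2 := by norm_num
    _ ≤ 2 ^ j := pow_le_pow_right₀ one_le_two hj

theorem sum_Ioc_one_two_pow {i : ℕ} (hi : 1 ≤ i) :
    ∑ j ∈ Finset.Ioc 1 i, (2 : ℝ) ^ j = 2 ^ (i + 1) - 4 := by
  induction i, hi using Nat.le_induction with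
  | base => norm_num
  | succ k hk ih => rw [Finset.sum_Ioc_succ_top hk, ih]; ring

namespace StaticLowerBound

theorem toLp_mem_centSquare {y : ℝ} (hy : 0 ≤ y) (p : Fin 2 → ℝ) :
    WithLp.toLp 2 p ∈ centSquare y ↔ ‖p‖ ≤ y / 2 := by
  rw [pi_norm_le_iff_of_nonneg (by positivity), Fin.forall_fin_two]
  rfl

/-- `annReg j` transported to `Fin 2 → ℝ`, whose sup norm makes `centSquare` a closed ball. -/
def region (j : ℕ) : Set (Fin 2 → ℝ) := {p | WithLp.toLp 2 p ∈ annReg j}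

theorem mem_region_one {p : Fin 2 → ℝ} : p ∈ region 1 ↔ ‖p‖ ≤ 1 := by
  simp [region, annReg, toLp_mem_centSquare]

theorem mem_region_of_two_le {j : ℕ} (hj : 2 ≤ j) {p : Fin 2 → ℝ} :
    p ∈ region j ↔ 2 ^ j / 4 < ‖p‖ ∧ ‖p‖ ≤ 2 ^ j / 2 := by
  have h : (2 : ℝ) ^ (j - 1) / 2 = 2 ^ j / 4 := by
    rw [show j = j - 1 + 1 by omega, pow_succ, Nat.add_sub_cancel]; ring
  simp [region, annReg, show j ≠ 1 by omega, toLp_mem_centSquare, h, and_comm]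

theorem norm_le_of_mem_region {j : ℕ} (hj : 1 ≤ j) {p : Fin 2 → ℝ} (hp : p ∈ region j) :
    ‖p‖ ≤ 2 ^ j / 2 := by
  rcases hj.eq_or_lt with rfl | hj
  · simpa using mem_region_one.mp hp
  · exact ((mem_region_of_two_le hj).mp hp).2

theorem disjoint_region_of_lt {j l : ℕ} (hj : 1 ≤ j) (hjl : j < l) :
    Disjoint (region j) (region l) := by
  refine Set.disjoint_left.mpr fun p hpj hpl => ?_
  have hpow : (2 : ℝ) ^ (j + 1) ≤ 2 ^ l := pow_le_pow_right₀ one_le_two hjl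
  linarith [norm_le_of_mem_region hj hpj, ((mem_region_of_two_le (by omega)).mp hpl).1,
    pow_succ (2 : ℝ) j]

theorem pairwiseDisjoint_region (i : ℕ) : (Finset.Icc 1 i : Set ℕ).PairwiseDisjoint region :=
  fun _ hj _ hl hjl => hjl.lt_or_gt.elim (disjoint_region_of_lt (Finset.mem_Icc.mp hj).1)
    fun h => (disjoint_region_of_lt (Finset.mem_Icc.mp hl).1 h).symm

noncomputable def coverRadius (i j : ℕ) : ℝ := (2 : ℝ) ^ (-(2 * ((i : ℤ) - j + 1)))

theorem coverRadius_pos (i j : ℕ) : 0 < coverRadius i j := zpow_pos two_pos _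

theorem four_mul_four_pow_mul_coverRadius (i j : ℕ) :
    4 * 4 ^ i * coverRadius i j = (2 ^ j) ^ 2 := by
  have h4 : (4 : ℝ) * 4 ^ i = 2 ^ (2 * (i : ℤ) + 2) := by
    rw [zpow_add₀ two_ne_zero, zpow_mul, mul_comm]; norm_num
  rw [h4, coverRadius, ← zpow_add₀ two_ne_zero, ← pow_mul, ← zpow_natCast]
  congr 1; push_cast; ring

/-- The margin `3/2 * coverRadius i j` leaves room for a sampling step of up to
`coverRadius i j / 2`. -/
def core (i j : ℕ) : Set (Fin 2 → ℝ) :=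
  if j = 1 then closedBall 0 (1 - 3 / 2 * coverRadius i j)
  else closedBall 0 (2 ^ j / 2 - 3 / 2 * coverRadius i j) \
    closedBall 0 (2 ^ j / 4 + 3 / 2 * coverRadius i j)

theorem closedBall_subset_region {i j : ℕ} (hj : 1 ≤ j) {δ : ℝ} (hδ : δ ≤ coverRadius i j / 2)
    {p : Fin 2 → ℝ} (hp : p ∈ core i j) : closedBall p (coverRadius i j + δ) ⊆ region j := by
  intro q hq
  have hq' := abs_le.mp ((abs_norm_sub_norm_le q p).trans (mem_closedBall.mp hq))
  rcases hj.eq_or_lt with rfl | hj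
  · simp only [core, if_true, mem_closedBall, dist_zero_right] at hp
    exact mem_region_one.mpr (by linarith)
  · simp only [core, if_neg hj.ne', mem_sdiff, mem_closedBall, dist_zero_right, not_le] at hp
    exact (mem_region_of_two_le hj).mpr ⟨by linarith, by linarith⟩

theorem volume_real_core_one {i : ℕ} (hr : 3 * coverRadius i 1 ≤ 2) :
    volume.real (core i 1) = (2 - 3 * coverRadius i 1) ^ 2 := by
  rw [core, if_pos rfl, volume_real_pi_closedBall _ (by linarith), Fintype.card_fin]
  ring

theorem volume_real_core {i j : ℕ} (hj : 2 ≤ j) (hr : 12 * coverRadius i j ≤ 2 ^ j) :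
    volume.real (core i j) =
      (2 ^ j - 3 * coverRadius i j) ^ 2 - (2 ^ j / 2 + 3 * coverRadius i j) ^ 2 := by
  have hr0 := coverRadius_pos i j
  rw [core, if_neg (by omega), measureReal_sdiff (closedBall_subset_closedBall (by linarith))
    measurableSet_closedBall measure_closedBall_lt_top.ne,
    volume_real_pi_closedBall _ (by linarith), volume_real_pi_closedBall _ (by linarith),
    Fintype.card_fin]
  ring

theorem sub_le_sweepLength_square {A r δ : ℝ} (hA : 4 ≤ A) (hr : A * r = 1) (hδ0 : 0 ≤ δ)
    (hδ : 16 * δ * A ^ 2 ≤ 1) :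
    A - 13 / 4 ≤ sweepLength 2 ((2 - 3 * r) ^ 2) (r + δ) := by
  have hr0 : 0 < r := by nlinarith
  rw [sweepLength, le_div_iff₀ (by positivity)]
  norm_num
  nlinarith [mul_nonneg hδ0 hr0.le, sq_nonneg δ, sq_nonneg r]

theorem sub_le_sweepLength_squareAnnulus {A a r δ : ℝ} (ha : 4 ≤ a) (haA : a ^ 2 ≤ A)
    (hr : 4 * A * r = a ^ 2) (hδ0 : 0 ≤ δ) (hδ : 16 * δ * A ^ 2 ≤ 1) :
    3 / 4 * A - 9 / 4 * a - 1 / 2 ≤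
      sweepLength 2 ((a - 3 * r) ^ 2 - (a / 2 + 3 * r) ^ 2) (r + δ) := by
  have hA : 0 < A := by nlinarith
  have hr4 : r ≤ 1 / 4 := by nlinarith
  have hr0 : 0 < r := by nlinarith
  have hAδ : 3 * A * δ ≤ r := le_of_mul_le_mul_right (by nlinarith) hA
  have hδ1 : δ ≤ 1 := by nlinarith
  rw [sweepLength, le_div_iff₀ (by positivity)]
  norm_num
  nlinarith [mul_nonneg hr0.le (by linarith : (0:ℝ) ≤ 1 - 4 * r),
    mul_nonneg hδ0 (by linarith : (0:ℝ) ≤ 1 - 4 * r),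
    mul_nonneg hδ0 (by linarith : (0:ℝ) ≤ 9 * a - 4 * δ)]

theorem le_sum_sweepLength_core {i : ℕ} (hi : 1 ≤ i) {δ : ℝ} (hδ0 : 0 ≤ δ)
    (hδ : 16 * δ * (4 ^ i) ^ 2 ≤ 1) :
    i * 4 ^ i / 2 - i * π / 2 ≤
      ∑ j ∈ Finset.Icc 1 i, sweepLength 2 (volume.real (core i j)) (coverRadius i j + δ) := by
  set A : ℝ := 4 ^ i
  have hA : 4 ≤ A := le_self_pow₀ (by norm_num) (by omega)
  have h1 : A - 13 / 4 ≤ sweepLength 2 (volume.real (core i 1)) (coverRadius i 1 + δ) := by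
    have hr : A * coverRadius i 1 = 1 := by
      linarith [four_mul_four_pow_mul_coverRadius i 1]
    rw [volume_real_core_one (by nlinarith)]
    exact sub_le_sweepLength_square hA hr hδ0 hδ
  have hj : ∀ j ∈ Finset.Ioc 1 i, 3 / 4 * A - 9 / 4 * 2 ^ j - 1 / 2 ≤
      sweepLength 2 (volume.real (core i j)) (coverRadius i j + δ) := by
    intro j hj
    obtain ⟨h1j, hji⟩ := Finset.mem_Ioc.mp hj
    have hr := four_mul_four_pow_mul_coverRadius i j
    have ha := four_le_two_pow h1j
    have haA : ((2 : ℝ) ^ j) ^ 2 ≤ A :=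
      calc ((2 : ℝ) ^ j) ^ 2 = 4 ^ j := by rw [← pow_mul, mul_comm, pow_mul]; norm_num
        _ ≤ A := pow_le_pow_right₀ (by norm_num) hji
    rw [volume_real_core h1j (by nlinarith)]
    exact sub_le_sweepLength_squareAnnulus ha haA hr hδ0 hδ
  have hsum : ∑ j ∈ Finset.Ioc 1 i, (3 / 4 * A - 9 / 4 * 2 ^ j - 1 / 2 : ℝ) =
      (i - 1) * (3 / 4 * A - 1 / 2) - 9 / 4 * (2 * 2 ^ i - 4) := by
    simp only [Finset.sum_sub_distrib, ← Finset.mul_sum, Finset.sum_const, nsmul_eq_mul,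
      Nat.card_Ioc, sum_Ioc_one_two_pow hi]
    rw [Nat.cast_sub (by omega), pow_succ]; push_cast; ring
  rw [← Finset.add_sum_Ioc_eq_sum_Icc hi]
  refine le_trans ?_ (add_le_add h1 (Finset.sum_le_sum hj))
  rw [hsum]
  have hπ := pi_gt_three
  rcases hi.eq_or_lt with rfl | hi2
  · norm_num [A]; linarith
  · have ha := four_le_two_pow hi2
    have hAa : A = (2 ^ i) ^ 2 := by rw [← pow_mul, mul_comm, pow_mul]; norm_num [A]
    have hi2' : (2 : ℝ) ≤ i := by exact_mod_cast hi2
    rw [hAa]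
    nlinarith [sq_nonneg ((2 : ℝ) ^ i - 3),
      mul_nonneg (by linarith : (0 : ℝ) ≤ i - 2) (sq_nonneg ((2 : ℝ) ^ i))]

theorem sum_sweepLength_core_le {i : ℕ} {x : ℝ} (hx : 0 ≤ x)
    {γ : ℝ → EuclideanSpace ℝ (Fin 2)} (hγ : LipschitzOnWith 1 γ (Icc 0 x))
    (hcover : ∀ j ∈ Finset.Icc 1 i, ∀ p ∈ annReg j, ∃ t ∈ Icc 0 x, dist p (γ t) ≤ coverRadius i j)
    {δ : ℝ} (hδ : 0 < δ) (hδA : 16 * δ * (4 ^ i) ^ 2 ≤ 1) :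
    ∑ j ∈ Finset.Icc 1 i, sweepLength 2 (volume.real (core i j)) (coverRadius i j + δ) ≤ x := by
  have hδr : ∀ j ∈ Finset.Icc 1 i, δ ≤ coverRadius i j / 2 := fun j hj => by
    have h2j : (2 : ℝ) ≤ 2 ^ j :=
      le_self_pow₀ one_le_two (by have := (Finset.mem_Icc.mp hj).1; omega)
    have h4i : (1 : ℝ) ≤ 4 ^ i := one_le_pow₀ (by norm_num)
    nlinarith [four_mul_four_pow_mul_coverRadius i j]
  have hofLp := PiLp.lipschitzWith_ofLp 2 fun _ : Fin 2 => ℝ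
  refine sum_sweepLength_le_of_lipschitzOnWith_cover (ι := Fin 2) hx hδ
    (by simpa using hofLp.comp_lipschitzOnWith hγ) (pairwiseDisjoint_region i)
    (fun j _ => (coverRadius_pos i j).le)
    (fun j hj _ hp => closedBall_subset_region (Finset.mem_Icc.mp hj).1 (hδr j hj) hp)
    fun j hj p hp => ?_
  have hpj : p ∈ region j := closedBall_subset_region (Finset.mem_Icc.mp hj).1 (hδr j hj) hp
    (mem_closedBall_self (by linarith [coverRadius_pos i j]))
  obtain ⟨t, ht, hpt⟩ := hcover j hj _ hpj
  have hdist : dist p (WithLp.ofLp (γ t)) ≤ dist (WithLp.toLp 2 p) (γ t) := by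
    simpa using hofLp.dist_le_mul (WithLp.toLp 2 p) (γ t)
  exact ⟨t, ht, hdist.trans hpt⟩

end StaticLowerBound

open StaticLowerBound in
/-- Any single curve of length x (a 1-Lipschitz map on [0,x]) whose r_j-neighborhood,
with r_j = 2^{-2(i-j+1)}, covers R_j for every j = 1,…,i has length at least
i·2^{2i-1} − i·π/2 = (1/2)·i·2^{2i} − i·π/2. -/
theorem static_lower_bound (i : ℕ) (hi : 1 ≤ i) (x : ℝ) (hx : 0 ≤ x)
    (γ : ℝ → EuclideanSpace ℝ (Fin 2)) (hγ : LipschitzOnWith 1 γ (Set.Icc 0 x))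
    (hcover : ∀ j ∈ Finset.Icc 1 i, ∀ p ∈ annReg j,
      ∃ t ∈ Set.Icc (0:ℝ) x, dist p (γ t) ≤ (2:ℝ) ^ (-(2 * ((i:ℤ) - j + 1)))) :
    (i : ℝ) * (2:ℝ) ^ (2 * (i:ℤ) - 1) - (i : ℝ) * π / 2 ≤ x ∧
    (1/2 : ℝ) * (i : ℝ) * (2:ℝ) ^ (2 * i) - (i : ℝ) * π / 2 ≤ x := by
  set δ : ℝ := 1 / (16 * (4 ^ i) ^ 2)
  have hδ : 0 < δ := by positivity
  have hδA : 16 * δ * (4 ^ i) ^ 2 = 1 := by simp only [δ]; field_simp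
  have hmain : (i : ℝ) * 4 ^ i / 2 - i * π / 2 ≤ x :=
    (le_sum_sweepLength_core hi hδ.le hδA.le).trans
      (sum_sweepLength_core_le hx hγ hcover hδ hδA.le)
  have h4 : (4 : ℝ) ^ i = 2 ^ (2 * i) := by rw [pow_mul]; norm_num
  have hzpow : (2 : ℝ) ^ (2 * (i : ℤ) - 1) = 4 ^ i / 2 := by
    rw [zpow_sub₀ two_ne_zero, zpow_one, h4, ← zpow_natCast]; push_cast; rfl
  constructor
  · rw [hzpow]; linarith
  · rw [← h4]; linarith
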